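/- arXiv:1310.3481 — 2 statements merged into one kernel-verified Lean document; each statement's English description precedes it below -/
import Mathlib

section
/- Correctness theorem: Let D be a pre-Kleene algebra, sem : E → D a function interpreting letters of an alphabet E, and let I[p] denote the interpretation of a regular expression p over E (interpreting ∅ as 0, ε as 1, a letter e as sem(e), + as ⊕, · as ⊙, and * as ⋆). Then for any word w = e₁⋯eₙ in the language of p, sem(e₁) ⊙ ⋯ ⊙ sem(eₙ) ≤ I[p]. -/
/-- A pre-Kleene algebra: join-semilattice with least element 0, a monoid (⊙,1),
pre-distributivity of ⊙ over ⊕, and the iteration axioms.  The order is `a ≤ b ↔ a ⊕ b = b`. -/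
structure PKA (K : Type*) where
  add : K → K → K
  mul : K → K → K
  star : K → K
  zero : K
  one : K
  add_assoc : ∀ a b c, add (add a b) c = add a (add b c)
  add_comm : ∀ a b, add a b = add b a
  add_idem : ∀ a, add a a = a
  add_zero : ∀ a, add a zero = a
  mul_assoc : ∀ a b c, mul (mul a b) c = mul a (mul b c)
  one_mul : ∀ a, mul one a = a
  mul_one : ∀ a, mul a one = a
  /-- (a⊙b)⊕(a⊙c) ≤ a⊙(b⊕c) -/
  left_pre : ∀ a b c, add (add (mul a b) (mul a c)) (mul a (add b c)) = mul a (add b c)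
  /-- (a⊙c)⊕(b⊙c) ≤ (a⊕b)⊙c -/
  right_pre : ∀ a b c, add (add (mul a c) (mul b c)) (mul (add a b) c) = mul (add a b) c
  /-- 1 ⊕ (a ⊙ a⋆) ≤ a⋆ -/
  star_unfold_l : ∀ a, add (add one (mul a (star a))) (star a) = star a
  /-- 1 ⊕ (a⋆ ⊙ a) ≤ a⋆ -/
  star_unfold_r : ∀ a, add (add one (mul (star a) a)) (star a) = star a

/-- The semilattice order: `a ≤ b` iff `a ⊕ b = b`. -/
def PKA.le {K : Type*} (P : PKA K) (a b : K) : Prop := P.add a b = b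

/-- n-fold product: `a^0 = 1`, `a^(n+1) = a^n ⊙ a`. -/
def PKA.pow {K : Type*} (P : PKA K) (a : K) : ℕ → K
  | 0 => P.one
  | n + 1 => P.mul (P.pow a n) a

/-- Regular expressions over alphabet `E`. -/
inductive RegExp (E : Type*) where
  | zero : RegExp E
  | eps : RegExp E
  | char : E → RegExp E
  | plus : RegExp E → RegExp E → RegExp E
  | cat : RegExp E → RegExp E → RegExp E
  | star : RegExp E → RegExp E

/-- The language of a regular expression. -/
def RegExp.lang {E : Type*} : RegExp E → Language E
  | .zero => 0
  | .eps => 1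
  | .char e => {[e]}
  | .plus p q => p.lang + q.lang
  | .cat p q => p.lang * q.lang
  | .star p => KStar.kstar p.lang

/-- Interpretation of a regular expression in a PKA. -/
def PKA.interp {K E : Type*} (P : PKA K) (sem : E → K) : RegExp E → K
  | .zero => P.zero
  | .eps => P.one
  | .char e => sem e
  | .plus p q => P.add (P.interp sem p) (P.interp sem q)
  | .cat p q => P.mul (P.interp sem p) (P.interp sem q)
  | .star p => P.star (P.interp sem p)

/-- Interpretation of a word: `sem e₁ ⊙ ⋯ ⊙ sem eₙ` (the empty word is `1`). -/
def PKA.semWord {K E : Type*} (P : PKA K) (sem : E → K) (w : List E) : K :=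
  w.foldr (fun e k => P.mul (sem e) k) P.one

/-!
Induction on `p`. Pre-distributivity says precisely that `⊙` is monotone in each argument,
which handles concatenation; a word of `p*` is a concatenation `u₁ ⋯ uₙ` of words of `p`,
and induction on `n` using `1 ≤ a⋆` and `a ⊙ a⋆ ≤ a⋆` bounds it by `I[p]⋆`.
-/

namespace PKA

variable {K : Type*} (P : PKA K)

theorem le_refl (a : K) : P.le a a := P.add_idem a

theorem le_trans {a b c : K} (hab : P.le a b) (hbc : P.le b c) : P.le a c := by
  unfold PKA.le at *
  rw [← hbc, ← P.add_assoc, hab]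

theorem le_add_left (a b : K) : P.le a (P.add a b) := by
  unfold PKA.le
  rw [← P.add_assoc, P.add_idem]

theorem le_add_right (a b : K) : P.le b (P.add a b) := by
  rw [P.add_comm]
  exact P.le_add_left b a

theorem mul_le_mul_left {b c : K} (a : K) (h : P.le b c) : P.le (P.mul a b) (P.mul a c) := by
  have h' := P.left_pre a b c
  rw [h] at h'
  exact P.le_trans (P.le_add_left _ _) h'

theorem mul_le_mul_right {a b : K} (c : K) (h : P.le a b) : P.le (P.mul a c) (P.mul b c) := by
  have h' := P.right_pre a b c
  rw [h] at h'
  exact P.le_trans (P.le_add_left _ _) h'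

theorem mul_le_mul {a a' b b' : K} (ha : P.le a a') (hb : P.le b b') :
    P.le (P.mul a b) (P.mul a' b') :=
  P.le_trans (P.mul_le_mul_right b ha) (P.mul_le_mul_left a' hb)

theorem one_le_star (a : K) : P.le P.one (P.star a) :=
  P.le_trans (P.le_add_left _ _) (P.star_unfold_l a)

theorem mul_star_le_star (a : K) : P.le (P.mul a (P.star a)) (P.star a) :=
  P.le_trans (P.le_add_right _ _) (P.star_unfold_l a)

section semWord

variable {E : Type*} (sem : E → K)

theorem semWord_nil : P.semWord sem [] = P.one := rfl

theorem semWord_cons (e : E) (w : List E) :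
    P.semWord sem (e :: w) = P.mul (sem e) (P.semWord sem w) := rfl

theorem semWord_singleton (e : E) : P.semWord sem [e] = sem e := P.mul_one (sem e)

theorem semWord_append (u v : List E) :
    P.semWord sem (u ++ v) = P.mul (P.semWord sem u) (P.semWord sem v) := by
  induction u with
  | nil => rw [List.nil_append, semWord_nil, P.one_mul]
  | cons e u ih => rw [List.cons_append, semWord_cons, semWord_cons, ih, P.mul_assoc]

theorem semWord_flatten_le_star {a : K} (L : List (List E))
    (hL : ∀ u ∈ L, P.le (P.semWord sem u) a) : P.le (P.semWord sem L.flatten) (P.star a) := by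
  induction L with
  | nil => exact P.one_le_star a
  | cons u L ih =>
    rw [List.flatten_cons, semWord_append]
    have hu : P.le (P.semWord sem u) a := hL u List.mem_cons_self
    have hrest := ih fun v hv => hL v (List.mem_cons_of_mem u hv)
    exact P.le_trans (P.mul_le_mul hu hrest) (P.mul_star_le_star a)

end semWord

end PKA

/-- Correctness: the interpretation of every word in the language of `p` is
approximated by the interpretation of `p`. -/
theorem pka_correctness {K E : Type*} (P : PKA K) (sem : E → K) (p : RegExp E)
    (w : List E) (hw : w ∈ p.lang) : P.le (P.semWord sem w) (P.interp sem p) := by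
  induction p generalizing w with
  | zero => exact absurd hw (Language.notMem_zero w)
  | eps =>
    obtain rfl : w = [] := hw
    exact P.le_refl P.one
  | char e =>
    obtain rfl : w = [e] := hw
    rw [P.semWord_singleton]
    exact P.le_refl (sem e)
  | plus p q ihp ihq =>
    rcases hw with hp | hq
    · exact P.le_trans (ihp w hp) (P.le_add_left _ _)
    · exact P.le_trans (ihq w hq) (P.le_add_right _ _)
  | cat p q ihp ihq =>
    obtain ⟨u, hu, v, hv, rfl⟩ := hw
    rw [P.semWord_append]
    exact P.mul_le_mul (ihp u hu) (ihq v hv)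
  | star p ihp =>
    obtain ⟨L, rfl, hL⟩ := Language.mem_kstar.mp hw
    exact P.semWord_flatten_le_star sem L fun u hu => ihp u (hL u hu)
end

section
/- For binary relations over environments, the quantification operator satisfies axiom (Q2): ∃x. ((∃x. R) ⊙ S) = (∃x. R) ⊙ (∃x. S), where ⊙ is relational composition and ∃x. R = {(ρ[x←n], ρ'[x←n]) : (ρ,ρ') ∈ R, n ∈ ℤ}. -/
/-- Existential quantification of a variable in a relation over environments:
`∃x. R = {(ρ[x←n], ρ'[x←n]) : (ρ,ρ') ∈ R, n ∈ ℤ}`. -/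
def exQ {Var : Type*} [DecidableEq Var] (x : Var)
    (R : Set ((Var → ℤ) × (Var → ℤ))) : Set ((Var → ℤ) × (Var → ℤ)) :=
  {p | ∃ (ρ ρ' : Var → ℤ) (n : ℤ), (ρ, ρ') ∈ R ∧ p.1 = Function.update ρ x n ∧ p.2 = Function.update ρ' x n}

/-- Relational composition. -/
def rcomp {A : Type*} (R S : Set (A × A)) : Set (A × A) :=
  {p | ∃ ρ', (p.1, ρ') ∈ R ∧ (ρ', p.2) ∈ S}

/-!
Resetting `x` to `n` in a chain `ρ ⟶ σ ⟶ ρ'` (including the middle environment) gives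
`∃x. (R ⊙ S) ⊆ (∃x. R) ⊙ (∃x. S)`, and `∃x` is idempotent, so `⊆` follows. For `⊇`, take
`(ρ, τ) ∈ ∃x. R` and `(τ, ρ') = (σ[x←n], σ'[x←n])` with `(σ, σ') ∈ S`. Since `τ` and `σ` differ only at `x`, resetting `x` in `(ρ, τ)` to `σ x` gives
`(ρ[x←σ x], σ) ∈ ∃x. R`; composing with `(σ, σ')` and resetting `x` to `n = ρ x` recovers
`(ρ, ρ')`.
-/

section

open Function

variable {Var : Type*} [DecidableEq Var] {x : Var} {R S : Set ((Var → ℤ) × (Var → ℤ))}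

variable (x) in
theorem update_mem_exQ (n : ℤ) {ρ ρ' : Var → ℤ} (h : (ρ, ρ') ∈ R) :
    (update ρ x n, update ρ' x n) ∈ exQ x R :=
  ⟨ρ, ρ', n, h, rfl, rfl⟩

theorem update_mem_exQ_of_mem (n : ℤ) {ρ ρ' : Var → ℤ} (h : (ρ, ρ') ∈ exQ x R) :
    (update ρ x n, update ρ' x n) ∈ exQ x R := by
  obtain ⟨σ, σ', m, hR, rfl, rfl⟩ := h
  simpa only [update_idem] using update_mem_exQ x n hR

theorem apply_eq_of_mem_exQ {ρ ρ' : Var → ℤ} (h : (ρ, ρ') ∈ exQ x R) : ρ x = ρ' x := by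
  obtain ⟨σ, σ', n, -, rfl, rfl⟩ := h
  simp

theorem exQ_exQ : exQ x (exQ x R) = exQ x R := by
  refine subset_antisymm ?_ ?_
  · rintro ⟨_, _⟩ ⟨ρ, ρ', n, h, rfl, rfl⟩
    exact update_mem_exQ_of_mem n h
  · rintro ⟨_, _⟩ ⟨ρ, ρ', n, h, rfl, rfl⟩
    simpa only [update_idem] using update_mem_exQ x n (update_mem_exQ x n h)

theorem exQ_rcomp_subset : exQ x (rcomp R S) ⊆ rcomp (exQ x R) (exQ x S) := by
  rintro ⟨_, _⟩ ⟨ρ, ρ', n, ⟨σ, hR, hS⟩, rfl, rfl⟩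
  exact ⟨update σ x n, update_mem_exQ x n hR, update_mem_exQ x n hS⟩

theorem rcomp_exQ_exQ_subset : rcomp (exQ x R) (exQ x S) ⊆ exQ x (rcomp (exQ x R) S) := by
  rintro ⟨ρ, _⟩ ⟨_, hR, σ, σ', n, hS, rfl, rfl⟩
  have hρ : ρ x = n := by simpa using apply_eq_of_mem_exQ hR
  have hR' : (update ρ x (σ x), σ) ∈ exQ x R := by
    simpa only [update_idem, update_eq_self] using update_mem_exQ_of_mem (σ x) hR
  have hcomp : (update ρ x (σ x), σ') ∈ rcomp (exQ x R) S := ⟨σ, hR', hS⟩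
  simpa only [update_idem, ← hρ, update_eq_self] using update_mem_exQ x n hcomp

end

/-- (Q2): `∃x. ((∃x. R) ⊙ S) = (∃x. R) ⊙ (∃x. S)`. -/
theorem exQ_Q2 {Var : Type*} [DecidableEq Var] (x : Var)
    (R S : Set ((Var → ℤ) × (Var → ℤ))) :
    exQ x (rcomp (exQ x R) S) = rcomp (exQ x R) (exQ x S) := by
  refine subset_antisymm ?_ rcomp_exQ_exQ_subset
  calc exQ x (rcomp (exQ x R) S)
      ⊆ rcomp (exQ x (exQ x R)) (exQ x S) := exQ_rcomp_subset
    _ = rcomp (exQ x R) (exQ x S) := by rw [exQ_exQ]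
end
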